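/- arXiv:1105.5992 — 5 statements merged into one kernel-verified Lean document; each statement's English description precedes it below -/
import Mathlib

section
/- Let θ₁, θ₃ be real numbers with 0 ≤ θ₃ < θ₁. Then the function w(θ₂) = (θ₁ + θ₂)/√(θ₁(θ₁ + 2θ₂ + θ₃)), defined for θ₂ ∈ [-√(θ₁θ₃), √(θ₁θ₃)], attains its global minimum value √(1 - θ₃/θ₁), achieved at θ₂ = -θ₃. -/
/-! For `θ₁ + θ₂ ≥ 0` one has `w(θ₂) = √((θ₁ + θ₂)² / (θ₁ (θ₁ + 2θ₂ + θ₃)))`, and the identity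
`(θ₁ + θ₂)² = (θ₁ - θ₃)(θ₁ + 2θ₂ + θ₃) + (θ₂ + θ₃)²` shows that the radicand is at least
`(θ₁ - θ₃) / θ₁ = 1 - θ₃ / θ₁`, with equality at `θ₂ = -θ₃`. On the interval
`[-√(θ₁θ₃), √(θ₁θ₃)]` both `θ₁ + θ₂ ≥ 0` and `θ₁ + 2θ₂ + θ₃ > 0` follow from the AM-GM bound
`2√(θ₁θ₃) < θ₁ + θ₃`. -/

open Real

lemma add_sq_eq_sub_mul_add_sq (a b c : ℝ) :
    (a + b) ^ 2 = (a - c) * (a + 2 * b + c) + (b + c) ^ 2 := by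
  ring

lemma div_sqrt_eq_sqrt_sq_div {x : ℝ} (hx : 0 ≤ x) (y : ℝ) : x / √y = √(x ^ 2 / y) := by
  rw [sqrt_div (sq_nonneg x), sqrt_sq hx]

lemma one_sub_div_le_sq_div {a b c : ℝ} (ha : 0 < a) (hd : 0 < a + 2 * b + c) :
    1 - c / a ≤ (a + b) ^ 2 / (a * (a + 2 * b + c)) := by
  have hlhs : (1 - c / a) * (a * (a + 2 * b + c)) = (a - c) * (a + 2 * b + c) := by
    field_simp
  rw [le_div_iff₀ (by positivity), hlhs, add_sq_eq_sub_mul_add_sq a b c]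
  exact le_add_of_nonneg_right (sq_nonneg _)

lemma sqrt_one_sub_div_le_div_sqrt {a b c : ℝ} (ha : 0 < a) (hd : 0 < a + 2 * b + c)
    (hab : 0 ≤ a + b) : √(1 - c / a) ≤ (a + b) / √(a * (a + 2 * b + c)) := by
  rw [div_sqrt_eq_sqrt_sq_div hab]
  exact sqrt_le_sqrt (one_sub_div_le_sq_div ha hd)

lemma sub_div_sqrt_mul_sub_eq {a c : ℝ} (ha : 0 < a) (hca : c < a) :
    (a + -c) / √(a * (a + 2 * -c + c)) = √(1 - c / a) := by
  have hac : a - c ≠ 0 := sub_ne_zero.mpr hca.ne'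
  rw [div_sqrt_eq_sqrt_sq_div (by linarith), show a + 2 * -c + c = a - c by ring,
    ← sub_eq_add_neg]
  congr 1
  field_simp

lemma le_sqrt_mul_of_le {a c : ℝ} (hc : 0 ≤ c) (hca : c ≤ a) : c ≤ √(a * c) :=
  le_sqrt_of_sq_le (by nlinarith)

lemma two_mul_sqrt_mul_lt_add {a c : ℝ} (hc : 0 ≤ c) (hca : c < a) :
    2 * √(a * c) < a + c := by
  have hsq : √(a * c) ^ 2 = a * c := sq_sqrt (by nlinarith)
  nlinarith [sqrt_nonneg (a * c), mul_pos (sub_pos.mpr hca) (sub_pos.mpr hca)]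

theorem w_global_min (θ₁ θ₃ : ℝ) (h3 : 0 ≤ θ₃) (h13 : θ₃ < θ₁) :
    (θ₁ + (-θ₃)) / Real.sqrt (θ₁ * (θ₁ + 2 * (-θ₃) + θ₃)) = Real.sqrt (1 - θ₃ / θ₁) ∧
    -θ₃ ∈ Set.Icc (-Real.sqrt (θ₁ * θ₃)) (Real.sqrt (θ₁ * θ₃)) ∧
    ∀ θ₂ ∈ Set.Icc (-Real.sqrt (θ₁ * θ₃)) (Real.sqrt (θ₁ * θ₃)),
      Real.sqrt (1 - θ₃ / θ₁) ≤ (θ₁ + θ₂) / Real.sqrt (θ₁ * (θ₁ + 2 * θ₂ + θ₃)) := by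
  have h1 : 0 < θ₁ := h3.trans_lt h13
  have hamgm := two_mul_sqrt_mul_lt_add h3 h13
  refine ⟨sub_div_sqrt_mul_sub_eq h1 h13,
    ⟨neg_le_neg (le_sqrt_mul_of_le h3 h13.le), by linarith [sqrt_nonneg (θ₁ * θ₃)]⟩, ?_⟩
  rintro θ₂ ⟨hlow, -⟩
  exact sqrt_one_sub_div_le_div_sqrt h1 (by linarith) (by linarith)
end

section
/- Let θ₁, θ₃ > 0 and θ₂ ∈ ℝ with -L√(θ₁θ₃) ≤ θ₂ < √(θ₁θ₃), where L ∈ (0,1). Define β(t) = (θ₁ + tθ₂)/√(θ₁(θ₁ + 2tθ₂ + t²θ₃)). Then for every t ∈ [0,1] with β(t) ≥ L, we have |β'(t)| ≤ 8θ₃/θ₁. -/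
/-! With `q = θ₁ (θ₁ + 2tθ₂ + t²θ₃) = (θ₁ + tθ₂)² + t² (θ₁θ₃ - θ₂²)` one has
`β' = -θ₁ t (θ₁θ₃ - θ₂²) / q^{3/2}`, whose numerator is at most `θ₁²θ₃` on `[0, 1]`.
So it suffices that `θ₁ + tθ₂ ≥ θ₁ / 2`, for then `q^{3/2} ≥ (θ₁ / 2)³`. This is clear if `θ₂ ≥ 0`.
If `θ₂ < 0`, then `θ₂² ≤ L²θ₁θ₃`, and squaring `β ≥ L` gives `θ₁ + tθ₂ ≥ |tθ₂|`. -/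

/-- The cosine of the angle between `u` and `u + t • v` when `θ₁ = ‖u‖²`, `θ₂ = ⟪u, v⟫`,
`θ₃ = ‖v‖²`. -/
noncomputable def beta (θ₁ θ₂ θ₃ t : ℝ) : ℝ :=
  (θ₁ + t * θ₂) / √(θ₁ * (θ₁ + 2 * t * θ₂ + t ^ 2 * θ₃))

lemma beta_radicand_eq (θ₁ θ₂ θ₃ t : ℝ) :
    θ₁ * (θ₁ + 2 * t * θ₂ + t ^ 2 * θ₃) = (θ₁ + t * θ₂) ^ 2 + t ^ 2 * (θ₁ * θ₃ - θ₂ ^ 2) := by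
  ring

lemma beta_radicand_pos {θ₁ θ₂ θ₃ : ℝ} (h1 : 0 < θ₁) (hD : θ₂ ^ 2 < θ₁ * θ₃) (t : ℝ) :
    0 < θ₁ * (θ₁ + 2 * t * θ₂ + t ^ 2 * θ₃) := by
  rw [beta_radicand_eq]
  rcases eq_or_ne t 0 with rfl | ht
  · simpa using pow_pos h1 2
  · have : 0 < t ^ 2 * (θ₁ * θ₃ - θ₂ ^ 2) := mul_pos (by positivity) (by linarith)
    positivity

lemma hasDerivAt_beta {θ₁ θ₂ θ₃ t : ℝ} (hq : 0 < θ₁ * (θ₁ + 2 * t * θ₂ + t ^ 2 * θ₃)) :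
    HasDerivAt (beta θ₁ θ₂ θ₃)
      (-(θ₁ * t * (θ₁ * θ₃ - θ₂ ^ 2)) / √(θ₁ * (θ₁ + 2 * t * θ₂ + t ^ 2 * θ₃)) ^ 3) t := by
  have hnum : HasDerivAt (fun s ↦ θ₁ + s * θ₂) θ₂ t := by
    simpa using ((hasDerivAt_id t).mul_const θ₂).const_add θ₁
  have hrad : HasDerivAt (fun s ↦ θ₁ * (θ₁ + 2 * s * θ₂ + s ^ 2 * θ₃))
      (θ₁ * (2 * θ₂ + 2 * t * θ₃)) t := by
    have := ((((hasDerivAt_id t).const_mul 2).mul_const θ₂).const_add θ₁).add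
      ((hasDerivAt_pow 2 t).mul_const θ₃)
    exact (this.const_mul θ₁).congr_deriv (by norm_num)
  have hr := Real.sqrt_pos.2 hq
  refine (hnum.div (hrad.sqrt hq.ne') hr.ne').congr_deriv ?_
  have hr2 := Real.sq_sqrt hq.le
  set r := √(θ₁ * (θ₁ + 2 * t * θ₂ + t ^ 2 * θ₃))
  field_simp
  rw [hr2]
  ring

lemma abs_mul_le_of_le_beta {θ₁ θ₂ θ₃ L t : ℝ} (hL0 : 0 < L) (hL1 : L < 1)
    (h2 : θ₂ ^ 2 ≤ L ^ 2 * (θ₁ * θ₃)) (hβ : L ≤ beta θ₁ θ₂ θ₃ t) :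
    |t * θ₂| ≤ θ₁ + t * θ₂ := by
  set q := θ₁ * (θ₁ + 2 * t * θ₂ + t ^ 2 * θ₃) with hq_def
  have hq : 0 < q := by
    by_contra! h
    rw [beta, Real.sqrt_eq_zero'.2 h, div_zero] at hβ
    linarith
  have hLA : L * √q ≤ θ₁ + t * θ₂ := (le_div_iff₀ (Real.sqrt_pos.2 hq)).1 hβ
  have hA : 0 ≤ θ₁ + t * θ₂ := le_trans (by positivity) hLA
  have hLA2 : L ^ 2 * q ≤ (θ₁ + t * θ₂) ^ 2 := by
    simpa [mul_pow, Real.sq_sqrt hq.le] using pow_le_pow_left₀ (by positivity) hLA 2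
  rw [hq_def, beta_radicand_eq] at hLA2
  -- `L² t² (θ₁θ₃ - θ₂²) ≥ (1 - L²) (tθ₂)²` by `h2`.
  have key : (1 - L ^ 2) * (t * θ₂) ^ 2 ≤ (1 - L ^ 2) * (θ₁ + t * θ₂) ^ 2 := by
    linear_combination hLA2 + t ^ 2 * h2
  have h1L : 0 < 1 - L ^ 2 := by nlinarith
  exact abs_le_of_sq_le_sq (le_of_mul_le_mul_left key h1L) hA

lemma abs_deriv_beta_le {θ₁ θ₂ θ₃ t : ℝ} (h1 : 0 < θ₁) (hD : θ₂ ^ 2 ≤ θ₁ * θ₃)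
    (ht0 : 0 ≤ t) (ht1 : t ≤ 1) (hA : θ₁ ≤ 2 * (θ₁ + t * θ₂)) :
    |-(θ₁ * t * (θ₁ * θ₃ - θ₂ ^ 2)) / √(θ₁ * (θ₁ + 2 * t * θ₂ + t ^ 2 * θ₃)) ^ 3|
      ≤ 8 * θ₃ / θ₁ := by
  have hr : θ₁ / 2 ≤ √(θ₁ * (θ₁ + 2 * t * θ₂ + t ^ 2 * θ₃)) := by
    rw [Real.le_sqrt' (by positivity), beta_radicand_eq]
    nlinarith [mul_nonneg (sq_nonneg t) (sub_nonneg.2 hD)]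
  have hnum : 0 ≤ θ₁ * t * (θ₁ * θ₃ - θ₂ ^ 2) := by
    have := sub_nonneg.2 hD
    positivity
  have hnum_le : θ₁ * t * (θ₁ * θ₃ - θ₂ ^ 2) ≤ θ₁ * (θ₁ * θ₃) :=
    mul_le_mul (mul_le_of_le_one_right h1.le ht1) (sub_le_self _ (sq_nonneg θ₂))
      (sub_nonneg.2 hD) h1.le
  rw [abs_div, abs_neg, abs_of_nonneg hnum, abs_of_nonneg (by positivity)]
  calc θ₁ * t * (θ₁ * θ₃ - θ₂ ^ 2) / √(θ₁ * (θ₁ + 2 * t * θ₂ + t ^ 2 * θ₃)) ^ 3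
      ≤ θ₁ * (θ₁ * θ₃) / (θ₁ / 2) ^ 3 :=
        div_le_div₀ (hnum.trans hnum_le) hnum_le (by positivity)
          (pow_le_pow_left₀ (by positivity) hr 3)
    _ = 8 * θ₃ / θ₁ := by field_simp; ring

theorem beta_deriv_bound_general_general (θ₁ θ₂ θ₃ L : ℝ) (h1 : 0 < θ₁)
    (hL0 : 0 < L) (hL1 : L < 1)
    (h2l : -(L * Real.sqrt (θ₁ * θ₃)) ≤ θ₂) (h2u : θ₂ < Real.sqrt (θ₁ * θ₃)) :
    ∀ t ∈ Set.Icc (0 : ℝ) 1,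
      L ≤ (θ₁ + t * θ₂) / Real.sqrt (θ₁ * (θ₁ + 2 * t * θ₂ + t ^ 2 * θ₃)) →
      |deriv (fun t : ℝ => (θ₁ + t * θ₂) / Real.sqrt (θ₁ * (θ₁ + 2 * t * θ₂ + t ^ 2 * θ₃))) t|
        ≤ 8 * θ₃ / θ₁ := by
  rintro t ⟨ht0, ht1⟩ hβ
  have hD : θ₂ ^ 2 < θ₁ * θ₃ :=
    Real.sq_lt.2 ⟨by nlinarith [Real.sqrt_nonneg (θ₁ * θ₃)], h2u⟩
  have hA : θ₁ ≤ 2 * (θ₁ + t * θ₂) := by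
    rcases le_or_gt 0 θ₂ with hθ₂ | hθ₂
    · nlinarith
    · have hL2 : θ₂ ^ 2 ≤ L ^ 2 * (θ₁ * θ₃) := by
        have : -θ₂ / L ≤ √(θ₁ * θ₃) := by rw [div_le_iff₀ hL0]; linarith
        rw [Real.le_sqrt' (div_pos (neg_pos.2 hθ₂) hL0), div_pow, neg_sq,
          div_le_iff₀ (by positivity)] at this
        linarith
      linarith [neg_abs_le (t * θ₂), abs_mul_le_of_le_beta hL0 hL1 hL2 hβ]
  change |deriv (beta θ₁ θ₂ θ₃) t| ≤ _
  rw [(hasDerivAt_beta (beta_radicand_pos h1 hD t)).deriv]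
  exact abs_deriv_beta_le h1 hD.le ht0 ht1 hA

theorem beta_deriv_bound_general (θ₁ θ₂ θ₃ L : ℝ) (h1 : 0 < θ₁) (h3 : 0 < θ₃)
    (hL0 : 0 < L) (hL1 : L < 1)
    (h2l : -(L * Real.sqrt (θ₁ * θ₃)) ≤ θ₂) (h2u : θ₂ < Real.sqrt (θ₁ * θ₃)) :
    ∀ t ∈ Set.Icc (0 : ℝ) 1,
      L ≤ (θ₁ + t * θ₂) / Real.sqrt (θ₁ * (θ₁ + 2 * t * θ₂ + t ^ 2 * θ₃)) →
      |deriv (fun t : ℝ => (θ₁ + t * θ₂) / Real.sqrt (θ₁ * (θ₁ + 2 * t * θ₂ + t ^ 2 * θ₃))) t|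
        ≤ 8 * θ₃ / θ₁ :=
  beta_deriv_bound_general_general θ₁ θ₂ θ₃ L h1 hL0 hL1 h2l h2u
end

section
/- Let y, v ∈ ℂ^{n+1} with y ≠ 0 and ‖v‖ ≤ ‖y‖. Then Re⟨y+v, y⟩/(‖y‖·‖y+v‖) ≥ √(1 - ‖v‖²/‖y‖²), where if y + v = 0 the claim is interpreted as vacuous (both sides: if v = -y then ‖v‖ = ‖y‖ and the right side is 0). -/
open scoped InnerProductSpace

/-- Writing `θ₁ = ‖y‖²`, `θ₂ = Re⟨y, v⟩`, `θ₃ = ‖v‖²`, the quotient on the right is the cosine of the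
angle between `y` and `y + v`. The hypothesis `θ₂² ≤ θ₁ θ₃` is Cauchy–Schwarz. -/
theorem sqrt_one_sub_div_le_add_div_sqrt {θ₁ θ₂ θ₃ : ℝ} (h₁ : 0 < θ₁) (h₃₁ : θ₃ ≤ θ₁)
    (h₂ : θ₂ ^ 2 ≤ θ₁ * θ₃) :
    √(1 - θ₃ / θ₁) ≤ (θ₁ + θ₂) / √(θ₁ * (θ₁ + 2 * θ₂ + θ₃)) := by
  have h₃ : 0 ≤ θ₃ := nonneg_of_mul_nonneg_right (h₂.trans' (sq_nonneg θ₂)) h₁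
  have hnum : 0 ≤ θ₁ + θ₂ := by nlinarith
  obtain hdeg | hpos := (show 0 ≤ θ₁ + 2 * θ₂ + θ₃ by nlinarith).eq_or_lt
  · -- `θ₂ = -(θ₁ + θ₃)/2` turns Cauchy–Schwarz into `(θ₁ - θ₃)² ≤ 0`.
    have : θ₃ = θ₁ := by nlinarith
    simpa [this, h₁.ne'] using div_nonneg hnum (Real.sqrt_nonneg _)
  · -- `(θ₁ + θ₂)² - (θ₁ - θ₃)(θ₁ + 2θ₂ + θ₃) = (θ₂ + θ₃)²`
    have key : (θ₁ - θ₃) * (θ₁ + 2 * θ₂ + θ₃) ≤ (θ₁ + θ₂) ^ 2 := by nlinarith [sq_nonneg (θ₂ + θ₃)]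
    rw [le_div_iff₀ (by positivity), ← Real.sqrt_mul' _ (by positivity)]
    calc √((1 - θ₃ / θ₁) * (θ₁ * (θ₁ + 2 * θ₂ + θ₃)))
        = √((θ₁ - θ₃) * (θ₁ + 2 * θ₂ + θ₃)) := by field_simp
      _ ≤ √((θ₁ + θ₂) ^ 2) := Real.sqrt_le_sqrt key
      _ = θ₁ + θ₂ := Real.sqrt_sq hnum

theorem sq_re_inner_le_mul {𝕜 E : Type*} [RCLike 𝕜] [SeminormedAddCommGroup E]
    [InnerProductSpace 𝕜 E] (x y : E) : (RCLike.re ⟪x, y⟫_𝕜) ^ 2 ≤ ‖x‖ ^ 2 * ‖y‖ ^ 2 := by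
  rw [← mul_pow, ← sq_abs]
  gcongr
  exact (RCLike.abs_re_le_norm _).trans (norm_inner_le_norm x y)

theorem re_inner_div_ge_sqrt (n : ℕ) (y v : EuclideanSpace ℂ (Fin (n + 1)))
    (hy : y ≠ 0) (hv : ‖v‖ ≤ ‖y‖) :
    Real.sqrt (1 - ‖v‖ ^ 2 / ‖y‖ ^ 2) ≤ (⟪y + v, y⟫_ℂ).re / (‖y‖ * ‖y + v‖) := by
  have hre : (⟪y + v, y⟫_ℂ).re = ‖y‖ ^ 2 + (⟪y, v⟫_ℂ).re := by
    rw [inner_add_left, Complex.add_re, ← RCLike.re_to_complex, inner_self_eq_norm_sq,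
      ← RCLike.re_to_complex, inner_re_symm, RCLike.re_to_complex]
  have hden : ‖y‖ * ‖y + v‖ = √(‖y‖ ^ 2 * (‖y‖ ^ 2 + 2 * (⟪y, v⟫_ℂ).re + ‖v‖ ^ 2)) := by
    rw [← RCLike.re_to_complex, ← norm_add_sq, ← mul_pow, Real.sqrt_sq (by positivity)]
  rw [hre, hden]
  refine sqrt_one_sub_div_le_add_div_sqrt (by positivity) (by gcongr) ?_
  exact sq_re_inner_le_mul (𝕜 := ℂ) y v
end

section
/- Let y, v ∈ ℂ^{n+1} with y ≠ 0 and ‖v‖ < ‖y‖. Then the projective (Riemannian) distance d_R(y+v, y) = arccos(|⟨y+v,y⟩|/(‖y‖·‖y+v‖)) satisfies d_R(y+v, y) ≤ arcsin(‖v‖/‖y‖). -/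
/-!
The real part of `⟪y + v, y⟫` already satisfies
`(re ⟪y + v, y⟫)² = (‖y‖² - ‖v‖²) ‖y + v‖² + (re ⟪v, y⟫ + ‖v‖²)²`, so the cosine of the
projective angle between `y + v` and `y` is at least `√(1 - ‖v‖² / ‖y‖²)`. Since `arccos` is
antitone and `arccos √(1 - s²) = arcsin s` for `s ≥ 0`, the angle is at most `arcsin (‖v‖ / ‖y‖)`.
-/

open scoped InnerProductSpace

theorem Real.arccos_le_arcsin_of_sqrt_one_sub_sq_le {s x : ℝ} (hs : 0 ≤ s)
    (hx : √(1 - s ^ 2) ≤ x) : Real.arccos x ≤ Real.arcsin s := by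
  rw [Real.arcsin_eq_arccos hs]
  exact Real.arccos_le_arccos hx

section InnerProductSpace

variable {𝕜 E : Type*} [RCLike 𝕜] [NormedAddCommGroup E] [InnerProductSpace 𝕜 E]

theorem sq_sub_sq_mul_norm_add_sq_le_sq_re_inner (y v : E) :
    (‖y‖ ^ 2 - ‖v‖ ^ 2) * ‖y + v‖ ^ 2 ≤ (RCLike.re ⟪y + v, y⟫_𝕜) ^ 2 := by
  have hre : RCLike.re ⟪y + v, y⟫_𝕜 = ‖y‖ ^ 2 + RCLike.re ⟪v, y⟫_𝕜 := by
    rw [inner_add_left, map_add, inner_self_eq_norm_sq]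
  rw [hre, norm_add_sq (𝕜 := 𝕜), inner_re_symm]
  nlinarith [sq_nonneg (RCLike.re ⟪v, y⟫_𝕜 + ‖v‖ ^ 2)]

theorem sqrt_one_sub_sq_div_le_norm_inner_add_div {y v : E} (hv : ‖v‖ < ‖y‖) :
    √(1 - (‖v‖ / ‖y‖) ^ 2) ≤ ‖⟪y + v, y⟫_𝕜‖ / (‖y‖ * ‖y + v‖) := by
  have hy : 0 < ‖y‖ := (norm_nonneg v).trans_lt hv
  have hyv : 0 < ‖y + v‖ := by linarith [norm_sub_le_norm_add y v]
  rw [Real.sqrt_le_left (by positivity), div_pow, div_pow, le_div_iff₀ (by positivity)]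
  calc (1 - ‖v‖ ^ 2 / ‖y‖ ^ 2) * (‖y‖ * ‖y + v‖) ^ 2
      = (‖y‖ ^ 2 - ‖v‖ ^ 2) * ‖y + v‖ ^ 2 := by field_simp
    _ ≤ (RCLike.re ⟪y + v, y⟫_𝕜) ^ 2 := sq_sub_sq_mul_norm_add_sq_le_sq_re_inner y v
    _ ≤ ‖⟪y + v, y⟫_𝕜‖ ^ 2 := sq_le_sq' (abs_le.mp (RCLike.abs_re_le_norm _)).1
        (RCLike.re_le_norm _)

end InnerProductSpace

theorem projective_dist_le_arcsin_general (n : ℕ) (y v : EuclideanSpace ℂ (Fin (n + 1)))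
    (hv : ‖v‖ < ‖y‖) :
    Real.arccos (‖⟪y + v, y⟫_ℂ‖ / (‖y‖ * ‖y + v‖)) ≤ Real.arcsin (‖v‖ / ‖y‖) :=
  Real.arccos_le_arcsin_of_sqrt_one_sub_sq_le (by positivity)
    (sqrt_one_sub_sq_div_le_norm_inner_add_div hv)

theorem projective_dist_le_arcsin (n : ℕ) (y v : EuclideanSpace ℂ (Fin (n + 1)))
    (hy : y ≠ 0) (hv : ‖v‖ < ‖y‖) :
    Real.arccos (‖⟪y + v, y⟫_ℂ‖ / (‖y‖ * ‖y + v‖)) ≤ Real.arcsin (‖v‖ / ‖y‖) :=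
  projective_dist_le_arcsin_general n y v hv
end

section
/- Let 1/2 < δ < 1, u₀ = 0.17586, a = (2δ-1)u₀/(√2 + 2δu₀), P = √2 + √(4 + 5/8), and c' = 1 - (1-a)^{P/√2}. Then c'/(P(1-a)) ≤ 3δu₀/2 and c'/P ≤ 3a/(2√2). -/
/-! Bernoulli's inequality gives `c' ≤ (P/√2) a`, which yields `c'/P ≤ a/√2` at once. For the
first bound, `1 - a = (√2 + u₀)/(√2 + 2δu₀)`, so `a/(1 - a) = (2δ-1)u₀/(√2 + u₀) ≤ (2δ-1)u₀/√2`. -/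

open Real

lemma one_sub_one_sub_rpow_le_mul {a p : ℝ} (ha : a ≤ 1) (hp : 1 ≤ p) :
    1 - (1 - a) ^ p ≤ p * a := by
  have h := one_add_mul_self_le_rpow_one_add (s := -a) (by linarith) hp
  rw [← sub_eq_add_neg] at h
  linarith

lemma one_sub_one_sub_rpow_div_le {a s P : ℝ} (ha : a ≤ 1) (hs : 0 < s) (hsP : s ≤ P) :
    (1 - (1 - a) ^ (P / s)) / P ≤ a / s := by
  rw [div_le_iff₀ (hs.trans_le hsP)]
  calc _ ≤ P / s * a := one_sub_one_sub_rpow_le_mul ha ((one_le_div hs).2 hsP)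
    _ = a / s * P := by ring

section Constants

variable {a δ u s : ℝ} (hδ : 1 / 2 ≤ δ) (hu : 0 ≤ u) (hs : 0 < s)
  (ha : a = (2 * δ - 1) * u / (s + 2 * δ * u))
include hδ hu hs ha

lemma nonneg_of_eq_div : 0 ≤ a := by
  rw [ha]
  apply div_nonneg <;> nlinarith

lemma one_sub_eq_div : 1 - a = (s + u) / (s + 2 * δ * u) := by
  have : 0 < s + 2 * δ * u := by nlinarith
  rw [ha]
  field_simp
  ring

lemma lt_one_of_eq_div : a < 1 := by
  have h := one_sub_eq_div hδ hu hs ha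
  have : 0 < (s + u) / (s + 2 * δ * u) := div_pos (by linarith) (by nlinarith)
  linarith

lemma div_div_one_sub_le : a / s / (1 - a) ≤ (2 * δ - 1) * u / s ^ 2 := by
  have hden : 0 < s + 2 * δ * u := by nlinarith
  have hsu : 0 < s + u := by linarith
  have hquot : a / s / (1 - a) = (2 * δ - 1) * u / (s * (s + u)) := by
    rw [one_sub_eq_div hδ hu hs ha, ha]
    field_simp
  rw [hquot]
  apply div_le_div_of_nonneg_left (by nlinarith) (by positivity)
  nlinarith

end Constants

theorem constants_inequalities_general (δ u₀ a P c' : ℝ)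
    (hδ1 : 1 / 2 < δ)
    (hu : u₀ = 0.17586)
    (ha : a = (2 * δ - 1) * u₀ / (Real.sqrt 2 + 2 * δ * u₀))
    (hP : P = Real.sqrt 2 + Real.sqrt (4 + 5 / 8))
    (hc : c' = 1 - (1 - a) ^ (P / Real.sqrt 2)) :
    c' / (P * (1 - a)) ≤ 3 * δ * u₀ / 2 ∧ c' / P ≤ 3 * a / (2 * Real.sqrt 2) := by
  have hs : 0 < √2 := by positivity
  have hu₀ : 0 ≤ u₀ := by norm_num [hu]
  have hsP : √2 ≤ P := by rw [hP]; linarith [Real.sqrt_nonneg (4 + 5 / 8)]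
  have ha0 := nonneg_of_eq_div hδ1.le hu₀ hs ha
  have ha1 := lt_one_of_eq_div hδ1.le hu₀ hs ha
  have hc'P : c' / P ≤ a / √2 := hc ▸ one_sub_one_sub_rpow_div_le ha1.le hs hsP
  constructor
  · calc c' / (P * (1 - a)) = c' / P / (1 - a) := by rw [div_div]
      _ ≤ a / √2 / (1 - a) := div_le_div_of_nonneg_right hc'P (by linarith)
      _ ≤ (2 * δ - 1) * u₀ / √2 ^ 2 := div_div_one_sub_le hδ1.le hu₀ hs ha
      _ ≤ 3 * δ * u₀ / 2 := by rw [Real.sq_sqrt zero_le_two]; nlinarith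
  · calc c' / P ≤ a / √2 := hc'P
      _ ≤ 3 * a / (2 * √2) := by
        rw [div_le_div_iff₀ hs (by positivity)]
        nlinarith

theorem constants_inequalities (δ u₀ a P c' : ℝ)
    (hδ1 : 1 / 2 < δ) (hδ2 : δ < 1)
    (hu : u₀ = 0.17586)
    (ha : a = (2 * δ - 1) * u₀ / (Real.sqrt 2 + 2 * δ * u₀))
    (hP : P = Real.sqrt 2 + Real.sqrt (4 + 5 / 8))
    (hc : c' = 1 - (1 - a) ^ (P / Real.sqrt 2)) :
    c' / (P * (1 - a)) ≤ 3 * δ * u₀ / 2 ∧ c' / P ≤ 3 * a / (2 * Real.sqrt 2) :=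
  constants_inequalities_general δ u₀ a P c' hδ1 hu ha hP hc
end
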